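/- Let π, π′, φ′ be partial plays of a parity game P such that π and π′ are finite, start at the same vertex, end at the same vertex, and out_P(π) ⊴ out_P(π′). Let φ be obtained from φ′ by replacing any number of segments of φ′ equal to π′ by π. Then out_P(φ) ⊴ out_P(φ′). -/

import Mathlib

/-- Outcomes of (partial) plays of a parity game. -/
inductive Outcome (V : Type) where
  | winOdd
  | winEven
  | fin (v : V) (p : ℕ)

/-- The order `⊑` on priorities, ranking them by favourability to Even. -/
def prioLe (i j : ℕ) : Prop :=
  (Odd i ∧ Even j) ∨ (Even i ∧ Even j ∧ j ≤ i) ∨ (Odd i ∧ Odd j ∧ i ≤ j)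

/-- The order `⊴` on outcomes: `winOdd` is minimum, `winEven` is maximum, and
`(v,p) ⊴ (w,q)` iff `v = w` and `p ⊑ q`. -/
def outLe {V : Type} : Outcome V → Outcome V → Prop
  | .winOdd, _ => True
  | _, .winEven => True
  | .fin v p, .fin w q => v = w ∧ prioLe p q
  | _, _ => False

/-- The outcome of a finite partial play `v₀,…,v_i`: the pair of the last vertex and the
minimal priority occurring along the play. -/
def out {V : Type} [Inhabited V] (Ω : V → ℕ) (l : List V) : Outcome V :=
  .fin l.getLast! ((l.map Ω).foldr min (Ω l.getLast!))

/-- `Repl π π' φ φ'` holds iff `φ` results from `φ'` by replacing some number of segments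
of `φ'` that are equal to `π'` by `π`. -/
inductive Repl {V : Type} (π π' : List V) : List V → List V → Prop
  | nil : Repl π π' [] []
  | cons (v : V) {l l' : List V} : Repl π π' l l' → Repl π π' (v :: l) (v :: l')
  | seg {l l' : List V} : Repl π π' l l' → Repl π π' (π ++ l) (π' ++ l')

section Aux

private lemma foldr_min_le_seed (L : List ℕ) (s : ℕ) : L.foldr min s ≤ s := by
  induction L with
  | nil => simp
  | cons a L ih => simp only [List.foldr_cons]; omega

private lemma foldr_min_le_mem {L : List ℕ} {t : ℕ} (ht : t ∈ L) (s : ℕ) :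
    L.foldr min s ≤ t := by
  induction L with
  | nil => simp at ht
  | cons a L ih =>
    simp only [List.foldr_cons]
    rcases List.mem_cons.mp ht with rfl | ht
    · omega
    · have := ih ht; omega

private lemma foldr_min_mem (L : List ℕ) (s : ℕ) :
    L.foldr min s = s ∨ L.foldr min s ∈ L := by
  induction L with
  | nil => simp
  | cons a L ih =>
    simp only [List.foldr_cons]
    rcases le_or_gt a (L.foldr min s) with h | h
    · right; rw [min_eq_left h]; exact List.mem_cons_self
    · rw [min_eq_right h.le]; rcases ih with h' | h'
      · left; exact h'
      · right; exact List.mem_cons_of_mem a h'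

private lemma foldr_min_seed_mem {L : List ℕ} {t : ℕ} (ht : t ∈ L) (s : ℕ) :
    L.foldr min s = min s (L.foldr min t) := by
  have h1 : L.foldr min s ≤ s := foldr_min_le_seed L s
  have h2 : L.foldr min s ≤ t := foldr_min_le_mem ht s
  have h6 : L.foldr min t ≤ t := foldr_min_le_seed L t
  rcases foldr_min_mem L s with h3 | h3 <;> rcases foldr_min_mem L t with h4 | h4
  · have := foldr_min_le_mem ht t; omega
  · have := foldr_min_le_mem h4 s
    have := foldr_min_le_mem ht t
    omega
  · have := foldr_min_le_mem h3 t; omega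
  · have := foldr_min_le_mem h4 s
    have := foldr_min_le_mem h3 t
    omega

private lemma foldr_min_seed_irrel {L : List ℕ} {s t : ℕ} (hs : s ∈ L) (ht : t ∈ L) :
    L.foldr min s = L.foldr min t := by
  have h1 := foldr_min_seed_mem ht s
  have h2 := foldr_min_seed_mem hs t
  omega

private lemma prioLe_refl (a : ℕ) : prioLe a a := by
  simp only [prioLe, Nat.even_iff, Nat.odd_iff]
  omega

private lemma prio_min_mono {a b c d : ℕ} (h1 : prioLe a b) (h2 : prioLe c d) :
    prioLe (min a c) (min b d) := by
  simp only [prioLe, Nat.even_iff, Nat.odd_iff] at *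
  omega

private lemma getLast!_eq_getLast {α} [Inhabited α] (l : List α) (h : l ≠ []) :
    l.getLast! = l.getLast h := by
  cases l with
  | nil => simp at h
  | cons a t => rfl

private lemma head!_eq_head {α} [Inhabited α] (l : List α) (h : l ≠ []) :
    l.head! = l.head h := by
  cases l with
  | nil => simp at h
  | cons a t => rfl

/-- The minimal priority along a (nonempty) list. -/
private def mval {V : Type} [Inhabited V] (Ω : V → ℕ) (l : List V) : ℕ :=
  (l.map Ω).foldr min (Ω l.head!)

private lemma head!_Ω_mem {V : Type} [Inhabited V] (Ω : V → ℕ) {l : List V} (h : l ≠ []) :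
    Ω l.head! ∈ l.map Ω := by
  rw [head!_eq_head l h]
  exact List.mem_map_of_mem (f := Ω) (List.head_mem h)

private lemma getLast!_Ω_mem {V : Type} [Inhabited V] (Ω : V → ℕ) {l : List V} (h : l ≠ []) :
    Ω l.getLast! ∈ l.map Ω := by
  rw [getLast!_eq_getLast l h]
  exact List.mem_map_of_mem (f := Ω) (List.getLast_mem h)

private lemma mval_eq_last_seed {V : Type} [Inhabited V] (Ω : V → ℕ) {l : List V} (h : l ≠ []) :
    (l.map Ω).foldr min (Ω l.getLast!) = mval Ω l :=
  foldr_min_seed_irrel (getLast!_Ω_mem Ω h) (head!_Ω_mem Ω h)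

private lemma mval_singleton {V : Type} [Inhabited V] (Ω : V → ℕ) (v : V) :
    mval Ω [v] = Ω v := by
  simp [mval, List.head!]

private lemma mval_cons {V : Type} [Inhabited V] (Ω : V → ℕ) (v : V) {l : List V}
    (h : l ≠ []) : mval Ω (v :: l) = min (Ω v) (mval Ω l) := by
  have hh : (v :: l).head! = v := rfl
  have h1 : (l.map Ω).foldr min (Ω v) = min (Ω v) (mval Ω l) :=
    foldr_min_seed_mem (head!_Ω_mem Ω h) (Ω v)
  simp only [mval, hh, List.map_cons, List.foldr_cons, h1]
  omega

private lemma foldr_min_min (L : List ℕ) (a b : ℕ) :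
    L.foldr min (min a b) = min a (L.foldr min b) := by
  induction L with
  | nil => rfl
  | cons x L ih => simp only [List.foldr_cons, ih]; omega

private lemma mval_append {V : Type} [Inhabited V] (Ω : V → ℕ) {p l : List V}
    (hp : p ≠ []) (h : l ≠ []) : mval Ω (p ++ l) = min (mval Ω p) (mval Ω l) := by
  have hh : (p ++ l).head! = p.head! := by
    cases p with
    | nil => simp at hp
    | cons a t => rfl
  simp only [mval, hh, List.map_append, List.foldr_append]
  rw [foldr_min_seed_mem (head!_Ω_mem Ω h) (Ω p.head!),
    min_comm (Ω p.head!) ((l.map Ω).foldr min (Ω l.head!)),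
    foldr_min_min,
    min_comm ((l.map Ω).foldr min (Ω l.head!)) ((p.map Ω).foldr min (Ω p.head!))]

private lemma head?_append_left {α} (p l : List α) (hp : p ≠ []) :
    (p ++ l).head? = p.head? := by
  cases p with
  | nil => simp at hp
  | cons a t => rfl

private lemma getLast?_append_right {α} (p l : List α) (hl : l ≠ []) :
    (p ++ l).getLast? = l.getLast? := by
  rw [List.getLast?_append, List.getLast?_eq_getLast hl]
  rfl

private lemma getLast?_cons_of_ne {α} (v : α) {l : List α} (h : l ≠ []) :
    (v :: l).getLast? = l.getLast? := by
  rw [List.getLast?_cons, List.getLast?_eq_getLast h]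
  rfl

private lemma repl_key {V : Type} [Inhabited V] (Ω : V → ℕ) {π π' : List V}
    (hπ : π ≠ []) (hπ' : π' ≠ []) (hh : π.head? = π'.head?) (hl : π.getLast? = π'.getLast?)
    (hm : prioLe (mval Ω π) (mval Ω π')) :
    ∀ {φ φ' : List V}, Repl π π' φ φ' →
      (φ = [] ∧ φ' = []) ∨
      (φ ≠ [] ∧ φ' ≠ [] ∧ φ.head? = φ'.head? ∧ φ.getLast? = φ'.getLast? ∧
        prioLe (mval Ω φ) (mval Ω φ')) := by
  intro φ φ' h
  induction h with
  | nil => exact Or.inl ⟨rfl, rfl⟩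
  | cons v h ih =>
    rcases ih with ⟨rfl, rfl⟩ | ⟨hne, hne', hhd, hlst, hple⟩
    · right
      refine ⟨by simp, by simp, rfl, rfl, ?_⟩
      rw [mval_singleton]; exact prioLe_refl _
    · right
      refine ⟨by simp, by simp, rfl, ?_, ?_⟩
      · rw [getLast?_cons_of_ne v hne, getLast?_cons_of_ne v hne', hlst]
      · rw [mval_cons Ω v hne, mval_cons Ω v hne']
        exact prio_min_mono (prioLe_refl _) hple
  | seg h ih =>
    rcases ih with ⟨rfl, rfl⟩ | ⟨hne, hne', hhd, hlst, hple⟩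
    · right
      simpa using ⟨hπ, hπ', hh, hl, hm⟩
    · right
      refine ⟨by simp [hπ], by simp [hπ'], ?_, ?_, ?_⟩
      · rw [head?_append_left _ _ hπ, head?_append_left _ _ hπ', hh]
      · rw [getLast?_append_right _ _ hne, getLast?_append_right _ _ hne', hlst]
      · rw [mval_append Ω hπ hne, mval_append Ω hπ' hne']
        exact prio_min_mono hm hple

end Aux

/-- If `π` and `π'` are finite partial plays of a parity game starting and ending at the
same vertices with `out(π) ⊴ out(π')`, and `φ` results from the partial play `φ'` by
replacing segments equal to `π'` by `π`, then `out(φ) ⊴ out(φ')`. -/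
theorem replacement_does_not_improve {V : Type} [Inhabited V] [Fintype V]
    (V0 : Set V) (E : V → V → Prop) (Ω : V → ℕ)
    (π π' φ φ' : List V)
    (hπne : π ≠ []) (hπ'ne : π' ≠ [])
    (hπ : π.Chain' E) (hπ' : π'.Chain' E)
    (hhead : π.head? = π'.head?) (hlast : π.getLast? = π'.getLast?)
    (hout : outLe (out Ω π) (out Ω π'))
    (hφ' : φ'.Chain' E)
    (hrepl : Repl π π' φ φ') :
    outLe (out Ω φ) (out Ω φ') := by
  have hgl : π.getLast! = π'.getLast! := by
    rw [getLast!_eq_getLast π hπne, getLast!_eq_getLast π' hπ'ne,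
      ← Option.some_inj, ← List.getLast?_eq_getLast, ← List.getLast?_eq_getLast, hlast]
  have hm : prioLe (mval Ω π) (mval Ω π') := by
    have h := hout
    simp only [out, outLe] at h
    rw [mval_eq_last_seed Ω hπne, mval_eq_last_seed Ω hπ'ne] at h
    exact h.2
  rcases repl_key Ω hπne hπ'ne hhead hlast hm hrepl with ⟨rfl, rfl⟩ |
      ⟨hne, hne', _, hlst, hple⟩
  · exact ⟨rfl, prioLe_refl _⟩
  · have hgl2 : φ.getLast! = φ'.getLast! := by
      rw [getLast!_eq_getLast φ hne, getLast!_eq_getLast φ' hne',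
        ← Option.some_inj, ← List.getLast?_eq_getLast, ← List.getLast?_eq_getLast, hlst]
    simp only [out, outLe]
    rw [mval_eq_last_seed Ω hne, mval_eq_last_seed Ω hne']
    exact ⟨hgl2, hple⟩
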